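/- arXiv:1007.1199 — 13 statements merged into one kernel-verified Lean document; each statement's English description precedes it below -/
import Mathlib

section
/- In a completely distributive De Morgan algebra, for every completely join-irreducible element j, the element j* = ⋀{x ∈ A : x ≰ c(j)} satisfies j* ≰ c(j). -/
/-- An element is completely join-irreducible if whenever it is the
supremum of a set, it belongs to that set. -/
def CompletelyJoinIrreducible {A : Type*} [CompleteLattice A] (j : A) : Prop :=
  ∀ S : Set A, j = sSup S → j ∈ S

theorem star_not_le_compl {A : Type*} [CompletelyDistribLattice A]
    (c : A → A) (hinv : ∀ x, c (c x) = x)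
    (hanti : ∀ x y : A, x ≤ y ↔ c y ≤ c x)
    (j : A) (hj : CompletelyJoinIrreducible j) :
    ¬ sInf {x : A | ¬ x ≤ c j} ≤ c j := by
  intro h
  set S := {x : A | ¬ x ≤ c j} with hS
  have hj' : j ≤ sSup (c '' S) := by
    have h1 : j ≤ c (sInf S) := by
      have h2 := (hanti (sInf S) (c j)).mp h
      rwa [hinv] at h2
    refine h1.trans ?_
    rw [hanti, hinv]
    apply le_sInf
    intro x hx
    rw [hanti, hinv]
    exact le_sSup ⟨x, hx, rfl⟩
  have hjoin : j = sSup ((fun t => j ⊓ t) '' (c '' S)) := by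
    rw [sSup_image, ← inf_sSup_eq]
    exact (inf_eq_left.mpr hj').symm
  obtain ⟨t, ht, hjt⟩ := hj _ hjoin
  obtain ⟨x, hxS, rfl⟩ := ht
  have hjcx : j ≤ c x := inf_eq_left.mp hjt
  have : x ≤ c j := by
    rw [hanti, hinv]
    exact hjcx
  exact hxS this
end

section
/- In a completely distributive De Morgan algebra, every completely join-irreducible element j satisfies j** = j. -/
/-- For a completely join-irreducible element `j`, `j* = ⋀{x : x ≰ c j}`. -/
def star {A : Type*} [CompleteLattice A] (c : A → A) (j : A) : A :=
  sInf {x : A | ¬ x ≤ c j}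

theorem star_star_eq {A : Type*} [CompletelyDistribLattice A]
    (c : A → A) (hinv : ∀ x, c (c x) = x)
    (hanti : ∀ x y : A, x ≤ y ↔ c y ≤ c x)
    (j : A) (hj : CompletelyJoinIrreducible j) :
    star c (star c j) = j := by
  -- j is completely join-prime
  have hprime : ∀ S : Set A, j ≤ sSup S → ∃ s ∈ S, j ≤ s := by
    intro S hle
    have hj2 : j = sSup ((fun b => j ⊓ b) '' S) := by
      rw [sSup_image, ← inf_sSup_eq]
      exact (inf_eq_left.mpr hle).symm
    obtain ⟨s, hs, hse⟩ := hj _ hj2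
    exact ⟨s, hs, by rw [← hse]; exact inf_le_right⟩
  -- c maps sInf to sSup
  have hcInf : ∀ S : Set A, c (sInf S) = sSup (c '' S) := by
    intro S
    apply le_antisymm
    · rw [hanti, hinv]
      apply le_sInf
      intro s hs
      rw [hanti, hinv]
      exact le_sSup ⟨s, hs, rfl⟩
    · apply sSup_le
      rintro _ ⟨s, hs, rfl⟩
      rw [← hanti]
      exact sInf_le hs
  -- j* ≰ c j
  have hstar : ¬ star c j ≤ c j := by
    intro h
    have h1 : j ≤ c (star c j) := (hanti j (c (star c j))).mpr (by rw [hinv]; exact h)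
    have h2 : j ≤ sSup (c '' {x : A | ¬ x ≤ c j}) :=
      le_of_le_of_eq h1 (hcInf _)
    obtain ⟨_, ⟨x, hx, rfl⟩, hjx⟩ := hprime _ h2
    exact hx ((hanti x (c j)).mpr (by rw [hinv]; exact hjx))
  apply le_antisymm
  · apply sInf_le
    intro h
    exact hstar ((hanti (star c j) (c j)).mpr (by rw [hinv]; exact h))
  · apply le_sInf
    intro x hx
    by_contra hjx
    apply hx
    refine (hanti x (c (star c j))).mpr ?_
    rw [hinv]
    exact sInf_le (fun hcx => hjx ((hanti j x).mpr hcx))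
end

section
/- In a De Morgan algebra defined on an algebraic (equivalently, doubly algebraic completely distributive) lattice, for every element x, c(x) = ⋁{ j completely join-irreducible : j* ≰ x }. -/
/-!
A completely join-irreducible element `j` of an algebraic lattice is compact, so in the
distributive case it is completely join-prime; for such `j` the condition `j* ≰ x` says exactly
`j ≤ c x`, since `j* ≤ c j` would put `j` below `⋁ {c y | y ≰ c j}`. It remains to see that every
element is the join of the completely join-irreducible elements below it: compactness and Zorn's
lemma separate points by completely meet-irreducible elements, and `c` turns these into
completely join-irreducible ones.
-/

open OrderDual

section Irreducible

variable {α β : Type*} [CompleteLattice α] [CompleteLattice β]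

def CompletelyMeetIrreducible (m : α) : Prop :=
  CompletelyJoinIrreducible (toDual m)

def CompletelyJoinPrime (j : α) : Prop :=
  ∀ T : Set α, j ≤ sSup T → ∃ t ∈ T, j ≤ t

theorem CompletelyJoinIrreducible.map_orderIso (e : α ≃o β) {a : α}
    (ha : CompletelyJoinIrreducible a) : CompletelyJoinIrreducible (e a) := by
  intro S hS
  obtain ⟨s, hs, rfl⟩ := ha (e.symm '' S) (by rw [← map_sSup, ← hS, e.symm_apply_apply])
  rwa [e.apply_symm_apply]

theorem CompletelyJoinIrreducible.supIrred {j : α} (hj : CompletelyJoinIrreducible j) :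
    SupIrred j := by
  refine ⟨fun hmin => ?_, fun a b hab => ?_⟩
  · exact hj ∅ (by rw [sSup_empty]; exact hmin.eq_bot)
  · exact (hj {a, b} (by rw [sSup_pair, hab])).imp Eq.symm
      fun h => (Set.eq_of_mem_singleton h).symm

theorem IsCompactElement.completelyJoinPrime {j : α} (hk : IsCompactElement j)
    (hp : SupPrime j) : CompletelyJoinPrime j := by
  intro T hT
  obtain ⟨t, htT, hjt⟩ :=
    (CompleteLattice.isCompactElement_iff_exists_le_sSup_of_le_sSup (k := j)).mp hk T hT
  obtain ⟨i, hi, hji⟩ := hp.le_finset_sup.mp hjt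
  exact ⟨i, htT hi, hji⟩

theorem CompletelyJoinIrreducible.isCompactElement [IsCompactlyGenerated α] {j : α}
    (hj : CompletelyJoinIrreducible j) : IsCompactElement j := by
  obtain ⟨s, hs, hsup⟩ := IsCompactlyGenerated.exists_sSup_eq j
  exact hs j (hj s hsup.symm)

theorem CompletelyJoinIrreducible.completelyJoinPrime [IsCompactlyGenerated α]
    (hdist : ∀ x y z : α, x ⊓ (y ⊔ z) = (x ⊓ y) ⊔ (x ⊓ z)) {j : α}
    (hj : CompletelyJoinIrreducible j) : CompletelyJoinPrime j := by
  let _ : DistribLattice α := DistribLattice.ofInfSupLe fun x y z => (hdist x y z).le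
  exact hj.isCompactElement.completelyJoinPrime (supPrime_iff_supIrred.mpr hj.supIrred)

theorem completelyMeetIrreducible_of_maximal {k m : α} (hm : Maximal (fun y => ¬ k ≤ y) m) :
    CompletelyMeetIrreducible m := by
  intro T hT
  have hT' : m = sInf (toDual ⁻¹' T) := congrArg ofDual hT
  by_contra hmT
  refine hm.prop (hT' ▸ le_sInf fun t ht => not_not.mp (hm.not_prop_of_gt ?_))
  exact (hT' ▸ sInf_le ht).lt_of_ne fun h => hmT (h ▸ ht)

theorem IsCompactElement.exists_le_maximal_not_le {k a : α} (hk : IsCompactElement k)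
    (hka : ¬ k ≤ a) : ∃ m, a ≤ m ∧ Maximal (fun y => ¬ k ≤ y) m := by
  refine zorn_le_nonempty₀ {y | ¬ k ≤ y} (fun ch hch hchain y hy => ?_) a hka
  refine ⟨sSup ch, fun hks => ?_, fun z hz => le_sSup hz⟩
  obtain ⟨z, hz, hkz⟩ :=
    (CompleteLattice.isCompactElement_iff_le_of_directed_sSup_le (k := k)).mp hk
      ch ⟨y, hy⟩ hchain.directedOn hks
  exact hch hz hkz

end Irreducible

section DeMorgan

variable {A : Type*} [CompleteLattice A]

def deMorganIso (c : A → A) (hinv : Function.Involutive c)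
    (hanti : ∀ x y : A, x ≤ y ↔ c y ≤ c x) : A ≃o Aᵒᵈ where
  toFun x := toDual (c x)
  invFun x := c (ofDual x)
  left_inv := hinv
  right_inv := hinv
  map_rel_iff' {x y} := (hanti x y).symm

theorem apply_sInf_eq_sSup_image (c : A → A) (hinv : Function.Involutive c)
    (hanti : ∀ x y : A, x ≤ y ↔ c y ≤ c x) (S : Set A) :
    c (sInf S) = sSup (c '' S) :=
  congrArg ofDual (map_sInf (deMorganIso c hinv hanti) S)

theorem CompletelyMeetIrreducible.completelyJoinIrreducible_apply (c : A → A)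
    (hinv : Function.Involutive c) (hanti : ∀ x y : A, x ≤ y ↔ c y ≤ c x) {m : A}
    (hm : CompletelyMeetIrreducible m) : CompletelyJoinIrreducible (c m) :=
  hm.map_orderIso (deMorganIso c hinv hanti).symm

theorem exists_completelyMeetIrreducible_ge_not_le [IsCompactlyGenerated A] {a u : A}
    (h : ¬ u ≤ a) : ∃ m, CompletelyMeetIrreducible m ∧ a ≤ m ∧ ¬ u ≤ m := by
  obtain ⟨k, hk, hku, hka⟩ : ∃ k, IsCompactElement k ∧ k ≤ u ∧ ¬ k ≤ a := by
    simpa using mt le_iff_compact_le_imp.mpr h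
  obtain ⟨m, ham, hm⟩ := hk.exists_le_maximal_not_le hka
  exact ⟨m, completelyMeetIrreducible_of_maximal hm, ham, fun hum => hm.prop (hku.trans hum)⟩

theorem exists_completelyJoinIrreducible_le_not_le [IsCompactlyGenerated A] (c : A → A)
    (hinv : Function.Involutive c) (hanti : ∀ x y : A, x ≤ y ↔ c y ≤ c x) {a u : A}
    (h : ¬ u ≤ a) : ∃ j, CompletelyJoinIrreducible j ∧ j ≤ u ∧ ¬ j ≤ a := by
  obtain ⟨m, hm, hum, ham⟩ :=
    exists_completelyMeetIrreducible_ge_not_le (a := c u) (u := c a) (by rwa [← hanti])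
  refine ⟨c m, hm.completelyJoinIrreducible_apply c hinv hanti, ?_, ?_⟩
  · rwa [hanti, hinv]
  · rwa [hanti, hinv]

theorem sSup_completelyJoinIrreducible_le [IsCompactlyGenerated A] (c : A → A)
    (hinv : Function.Involutive c) (hanti : ∀ x y : A, x ≤ y ↔ c y ≤ c x) (u : A) :
    sSup {j | CompletelyJoinIrreducible j ∧ j ≤ u} = u := by
  refine le_antisymm (sSup_le fun j hj => hj.2) (by_contra fun h => ?_)
  obtain ⟨j, hj, hju, hjS⟩ := exists_completelyJoinIrreducible_le_not_le c hinv hanti h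
  exact hjS (le_sSup ⟨hj, hju⟩)

theorem CompletelyJoinPrime.not_star_le_iff (c : A → A) (hinv : Function.Involutive c)
    (hanti : ∀ x y : A, x ≤ y ↔ c y ≤ c x) {j : A} (hj : CompletelyJoinPrime j) (x : A) :
    ¬ star c j ≤ x ↔ j ≤ c x := by
  rw [hanti j, hinv]
  refine ⟨fun h => not_not.mp fun hx => h (sInf_le hx), fun hx hstar => ?_⟩
  have hj_le : c (c j) ≤ c (sInf {y | ¬ y ≤ c j}) := (hanti _ _).mp (hstar.trans hx)
  rw [hinv, apply_sInf_eq_sSup_image c hinv hanti] at hj_le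
  obtain ⟨_, ⟨y, hy, rfl⟩, hjy⟩ := hj _ hj_le
  exact hy (by rwa [hanti, hinv])

end DeMorgan

/-- In a De Morgan algebra defined on an algebraic (distributive) lattice,
`c x = ⋁ { j completely join-irreducible : j* ≰ x }`. -/
theorem compl_eq_sSup_star_not_le {A : Type*} [CompleteLattice A] [IsCompactlyGenerated A]
    (hdist : ∀ x y z : A, x ⊓ (y ⊔ z) = (x ⊓ y) ⊔ (x ⊓ z))
    (c : A → A) (hinv : ∀ x, c (c x) = x)
    (hanti : ∀ x y : A, x ≤ y ↔ c y ≤ c x)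
    (x : A) :
    c x = sSup {j : A | CompletelyJoinIrreducible j ∧ ¬ star c j ≤ x} := by
  have hS : {j : A | CompletelyJoinIrreducible j ∧ ¬ star c j ≤ x} =
      {j | CompletelyJoinIrreducible j ∧ j ≤ c x} := by
    ext j
    exact and_congr_right fun hj => (hj.completelyJoinPrime hdist).not_star_le_iff c hinv hanti x
  rw [hS, sSup_completelyJoinIrreducible_le c hinv hanti]
end

section
/- If A is a Kleene algebra defined on a complete lattice, then with α = ⋁A⁻ and β = ⋀A⁺, one has A⁻ = (α] (the principal ideal of α), A⁺ = [β) (the principal filter of β), and c(α) = β. -/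
/-- In a Kleene algebra on a complete lattice, with `α = ⋁ A⁻` and `β = ⋀ A⁺`,
`A⁻` is the principal ideal of `α`, `A⁺` is the principal filter of `β`, and
`c α = β`. -/
theorem kleene_alpha_beta {A : Type*} [CompleteLattice A]
    (hdist : ∀ x y z : A, x ⊓ (y ⊔ z) = (x ⊓ y) ⊔ (x ⊓ z))
    (c : A → A) (hinv : ∀ x, c (c x) = x)
    (hanti : ∀ x y : A, x ≤ y ↔ c y ≤ c x)
    (hkl : ∀ x y : A, x ⊓ c x ≤ y ⊔ c y) :
    {a : A | ∃ x, a = x ⊓ c x} = {a : A | a ≤ sSup {a : A | ∃ x, a = x ⊓ c x}} ∧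
    {a : A | ∃ x, a = x ⊔ c x} = {a : A | sInf {a : A | ∃ x, a = x ⊔ c x} ≤ a} ∧
    c (sSup {a : A | ∃ x, a = x ⊓ c x}) = sInf {a : A | ∃ x, a = x ⊔ c x} := by
  have hmono : ∀ x y : A, x ≤ y → c y ≤ c x := fun x y h => (hanti x y).mp h
  set S : Set A := {a : A | ∃ x, a = x ⊓ c x} with hS
  set T : Set A := {a : A | ∃ x, a = x ⊔ c x} with hT
  set α : A := sSup S with hα
  set β : A := sInf T with hβ
  -- c maps S into T and T into S
  have hcS : ∀ a ∈ S, c a ∈ T := by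
    rintro a ⟨x, rfl⟩
    refine ⟨c x, ?_⟩
    rw [hinv]
    apply le_antisymm
    · have h1 : c (c x ⊔ x) ≤ x := by
        have := hmono _ _ (le_sup_left : c x ≤ c x ⊔ x)
        rwa [hinv] at this
      have h2 : c (c x ⊔ x) ≤ c x := hmono _ _ le_sup_right
      have := hmono _ _ (le_inf h1 h2 : c (c x ⊔ x) ≤ x ⊓ c x)
      rwa [hinv] at this
    · refine sup_le (hmono _ _ inf_le_left) ?_
      have := hmono _ _ (inf_le_right : x ⊓ c x ≤ c x)
      rwa [hinv] at this
  have hcT : ∀ a ∈ T, c a ∈ S := by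
    rintro a ⟨x, rfl⟩
    refine ⟨c x, ?_⟩
    rw [hinv]
    apply le_antisymm
    · refine le_inf (hmono _ _ le_sup_left) ?_
      have := hmono _ _ (le_sup_right : c x ≤ x ⊔ c x)
      rwa [hinv] at this
    · have h1 : x ≤ c (c x ⊓ x) := by
        have := hmono _ _ (inf_le_left : c x ⊓ x ≤ c x)
        rwa [hinv] at this
      have h2 : c x ≤ c (c x ⊓ x) := hmono _ _ inf_le_right
      have := hmono _ _ (sup_le h1 h2 : x ⊔ c x ≤ c (c x ⊓ x))
      rwa [hinv] at this
  -- α ≤ β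
  have hαβ : α ≤ β := by
    refine sSup_le ?_
    rintro n ⟨x, rfl⟩
    refine le_sInf ?_
    rintro p ⟨y, rfl⟩
    exact hkl x y
  -- c α = β
  have hcαβ : c α = β := by
    apply le_antisymm
    · refine le_sInf ?_
      intro p hp
      have h1 : c p ∈ S := hcT p hp
      have h2 : c p ≤ α := le_sSup h1
      have := hmono _ _ h2
      rwa [hinv] at this
    · have h1 : α ≤ c β := by
        refine sSup_le ?_
        intro n hn
        have h2 : c n ∈ T := hcS n hn
        have h3 : β ≤ c n := sInf_le h2
        have := hmono _ _ h3
        rwa [hinv] at this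
      have := hmono _ _ h1
      rwa [hinv] at this
  have hcβα : c β = α := by rw [← hcαβ, hinv]
  refine ⟨?_, ?_, hcαβ⟩
  · ext a
    constructor
    · intro ha
      exact le_sSup ha
    · intro (ha : a ≤ α)
      have h1 : a ≤ c a := by
        calc a ≤ α := ha
        _ ≤ β := hαβ
        _ = c α := hcαβ.symm
        _ ≤ c a := hmono _ _ ha
      exact ⟨a, (inf_eq_left.mpr h1).symm⟩
  · ext a
    constructor
    · intro ha
      exact sInf_le ha
    · intro (ha : β ≤ a)
      have h1 : c a ≤ a := by
        calc c a ≤ c β := hmono _ _ ha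
        _ = α := hcβα
        _ ≤ β := hαβ
        _ ≤ a := ha
      exact ⟨a, (sup_eq_left.mpr h1).symm⟩
end

section
/- In a completely distributive Kleene algebra, every completely join-irreducible element j is comparable with j*; that is, j ≤ j* or j* ≤ j. -/
/-- In a completely distributive Kleene algebra, every completely
join-irreducible `j` is comparable with `j*`. -/
theorem cji_comparable_star {A : Type*} [CompletelyDistribLattice A]
    (c : A → A) (hinv : ∀ x, c (c x) = x)
    (hanti : ∀ x y : A, x ≤ y ↔ c y ≤ c x)
    (hkl : ∀ x y : A, x ⊓ c x ≤ y ⊔ c y)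
    (j : A) (hj : CompletelyJoinIrreducible j) :
    j ≤ star c j ∨ star c j ≤ j := by
  by_cases hc : j ≤ c j
  · -- j ≤ c j : show j ≤ star c j
    left
    apply le_sInf
    intro x hx
    -- j ≤ x ⊔ c x
    have h1 : j ≤ x ⊔ c x := by
      have := hkl j x
      rwa [inf_eq_left.mpr hc] at this
    -- j is join-prime
    have hprime : j ≤ x ∨ j ≤ c x := by
      have heq : j = (j ⊓ x) ⊔ (j ⊓ c x) := by
        rw [← inf_sup_left, inf_eq_left.mpr h1]
      have hmem := hj {j ⊓ x, j ⊓ c x} (by rw [sSup_pair]; exact heq)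
      rcases hmem with h | h
      · exact Or.inl (by rw [h]; exact inf_le_right)
      · exact Or.inr (by rw [h]; exact inf_le_right)
    rcases hprime with h | h
    · exact h
    · exfalso
      apply hx
      have := (hanti j (c x)).mp h
      rwa [hinv] at this
  · -- j ≰ c j : j itself is in the set
    right
    exact sInf_le hc
end

section
/- In a completely distributive Kleene algebra, a completely join-irreducible element j satisfies j < j* if and only if j ≤ c(j); equivalently, the set J⁻ of completely join-irreducible elements j with j < j* equals the intersection of the set of completely join-irreducible elements with A⁻ = {a : a ≤ c(a)}. -/
/-- Completely join-irreducible elements are completely join-prime in a frame. -/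
lemma cji_prime {A : Type*} [CompletelyDistribLattice A] {j : A}
    (hj : CompletelyJoinIrreducible j) (S : Set A) (h : j ≤ sSup S) :
    ∃ s ∈ S, j ≤ s := by
  have h1 : j = sSup ((fun s => j ⊓ s) '' S) := by
    rw [sSup_image]
    have : j ⊓ sSup S = ⨆ b ∈ S, j ⊓ b := inf_sSup_eq
    rw [← this, inf_eq_left.mpr h]
  obtain ⟨s, hs, hjs⟩ := hj _ h1
  exact ⟨s, hs, by rw [← hjs]; exact inf_le_right⟩

/-- In a completely distributive Kleene algebra, a completely join-irreducible
`j` satisfies `j < j*` iff `j ≤ c j`; equivalently `J⁻ = J ∩ A⁻`. -/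
theorem cji_lt_star_iff_le_compl {A : Type*} [CompletelyDistribLattice A]
    (c : A → A) (hinv : ∀ x, c (c x) = x)
    (hanti : ∀ x y : A, x ≤ y ↔ c y ≤ c x)
    (hkl : ∀ x y : A, x ⊓ c x ≤ y ⊔ c y) :
    (∀ j : A, CompletelyJoinIrreducible j → (j < star c j ↔ j ≤ c j)) ∧
    {j : A | CompletelyJoinIrreducible j ∧ j < star c j} =
      {j : A | CompletelyJoinIrreducible j} ∩ {a : A | a ≤ c a} := by
  have hcInf : ∀ S : Set A, c (sInf S) = sSup (c '' S) := by
    intro S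
    apply le_antisymm
    · have h1 : c (sSup (c '' S)) ≤ sInf S := by
        apply le_sInf
        intro s hs
        have : c s ≤ sSup (c '' S) := le_sSup ⟨s, hs, rfl⟩
        have := (hanti (c s) (sSup (c '' S))).mp this
        rwa [hinv] at this
      have := (hanti _ _).mp h1
      rwa [hinv] at this
    · apply sSup_le
      rintro _ ⟨s, hs, rfl⟩
      exact (hanti _ _).mp (sInf_le hs)
  have main : ∀ j : A, CompletelyJoinIrreducible j → (j < star c j ↔ j ≤ c j) := by
    intro j hj
    constructor
    · intro hlt
      by_contra hle
      have : _root_.star c j ≤ j := sInf_le (by exact hle)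
      exact absurd this hlt.not_ge
    · intro hle
      have hjstar : j ≤ star c j := by
        apply le_sInf
        intro x hx
        have hxcj : ¬ x ≤ c j := hx
        have hjx : j ≤ x ⊔ c x := by
          have := hkl j x
          rwa [inf_eq_left.mpr hle] at this
        have : j ≤ sSup {x, c x} := by rwa [sSup_pair]
        obtain ⟨s, hs, hjs⟩ := cji_prime hj _ this
        rcases hs with rfl | rfl
        · exact hjs
        · exfalso
          apply hxcj
          have := (hanti j (c x)).mp hjs
          rwa [hinv] at this
      rcases lt_or_eq_of_le hjstar with h | h
      · exact h
      · exfalso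
        -- j = star c j, and j ≤ c j, so star c j ≤ c j, i.e. j ≤ c (star c j)
        have hstarle : star c j ≤ c j := h ▸ hle
        have hjc : j ≤ c (star c j) := by
          have := (hanti _ _).mp hstarle
          rwa [hinv] at this
        rw [show _root_.star c j = sInf {x : A | ¬ x ≤ c j} from rfl, hcInf] at hjc
        obtain ⟨s, hs, hjs⟩ := cji_prime hj _ hjc
        obtain ⟨x, hx, rfl⟩ := hs
        apply hx
        have := (hanti j (c x)).mp hjs
        rwa [hinv] at this
  refine ⟨main, ?_⟩
  ext j
  simp only [Set.mem_setOf_eq, Set.mem_inter_iff]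
  exact ⟨fun ⟨h1, h2⟩ => ⟨h1, (main j h1).mp h2⟩, fun ⟨h1, h2⟩ => ⟨h1, (main j h1).mpr h2⟩⟩
end

section
/- Let R be a quasiorder (reflexive transitive relation) on a set U. For X ⊆ U define X▼ = {x : R(x) ⊆ X} and X▲ = {x : R(x) ∩ X ≠ ∅}. Then for the rough set lattice RS = {(X▼, X▲) : X ⊆ U} ordered componentwise, with c(X▼,X▲) = ((X▲)ᶜ, (X▼)ᶜ), the Kleene inequality holds: for all rough sets x, y, x ∧ c(x) ≤ y ∨ c(y); hence RS with c is a Kleene algebra. -/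
variable {U : Type*}

/-- `R(x) = {y : x R y}`. -/
def rset (R : U → U → Prop) (x : U) : Set U := {y | R x y}

/-- Lower approximation `X▼ = {x : R(x) ⊆ X}`. -/
def lap (R : U → U → Prop) (X : Set U) : Set U := {x | rset R x ⊆ X}

/-- Upper approximation `X▲ = {x : R(x) ∩ X ≠ ∅}`. -/
def uap (R : U → U → Prop) (X : Set U) : Set U := {x | (rset R x ∩ X).Nonempty}

/-- The set of rough sets determined by `R`. -/
def RS (R : U → U → Prop) : Set (Set U × Set U) := {p | ∃ X, p = (lap R X, uap R X)}

/-- The De Morgan complement on pairs: `c(X▼,X▲) = ((X▲)ᶜ, (X▼)ᶜ)`. -/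
def cpair (p : Set U × Set U) : Set U × Set U := (p.2ᶜ, p.1ᶜ)

/-!
The approximations are dual, `(X▲)ᶜ = (Xᶜ)▼` and `(X▼)ᶜ = (Xᶜ)▲`, so `c` sends the rough set of
`X` to that of `Xᶜ`. By reflexivity `X▼ ⊆ X ⊆ X▲`; hence in `x ∧ c x` the lower component
`X▼ ∩ (Xᶜ)▼ ⊆ X ∩ Xᶜ` is empty, while in `y ∨ c y` the upper component
`Y▲ ∪ (Yᶜ)▲ ⊇ Y ∪ Yᶜ` is everything.
-/

section Approximations

variable (R : U → U → Prop)

theorem compl_uap (X : Set U) : (uap R X)ᶜ = lap R Xᶜ := by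
  ext x
  simp [uap, lap, rset, Set.not_nonempty_iff_eq_empty, Set.eq_empty_iff_forall_notMem,
    Set.subset_def]

theorem compl_lap (X : Set U) : (lap R X)ᶜ = uap R Xᶜ := by
  rw [← compl_compl (uap R Xᶜ), compl_uap, compl_compl]

theorem cpair_lap_uap (X : Set U) : cpair (lap R X, uap R X) = (lap R Xᶜ, uap R Xᶜ) := by
  simp only [cpair, compl_uap, compl_lap]

variable {R}

theorem lap_subset_self (hrefl : ∀ x, R x x) (X : Set U) : lap R X ⊆ X :=
  fun x hx => hx (hrefl x)

theorem subset_uap (hrefl : ∀ x, R x x) (X : Set U) : X ⊆ uap R X :=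
  fun x hx => ⟨x, hrefl x, hx⟩

theorem lap_inter_lap_compl (hrefl : ∀ x, R x x) (X : Set U) : lap R X ∩ lap R Xᶜ = ∅ :=
  Set.subset_empty_iff.mp <| (Set.inter_subset_inter (lap_subset_self hrefl X)
    (lap_subset_self hrefl Xᶜ)).trans (Set.inter_compl_self X).subset

theorem uap_union_uap_compl (hrefl : ∀ x, R x x) (X : Set U) : uap R X ∪ uap R Xᶜ = Set.univ :=
  Set.univ_subset_iff.mp <| (Set.union_compl_self X).symm.subset.trans
    (Set.union_subset_union (subset_uap hrefl X) (subset_uap hrefl Xᶜ))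

end Approximations

theorem roughSets_kleene_general (R : U → U → Prop) (hrefl : Reflexive R) :
    (∀ X : Set U, cpair (lap R X, uap R X) = (lap R Xᶜ, uap R Xᶜ)) ∧
    (∀ X Y : Set U,
      ((lap R X, uap R X) ⊓ cpair (lap R X, uap R X) : Set U × Set U) ≤
        (lap R Y, uap R Y) ⊔ cpair (lap R Y, uap R Y)) := by
  refine ⟨cpair_lap_uap R, fun X Y => ?_⟩
  rw [cpair_lap_uap, cpair_lap_uap]
  constructor
  · show lap R X ∩ lap R Xᶜ ⊆ _
    simp [lap_inter_lap_compl hrefl]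
  · show _ ⊆ uap R Y ∪ uap R Yᶜ
    simp [uap_union_uap_compl hrefl]

/-- Rough sets of a quasiorder satisfy the Kleene inequality (with componentwise
lattice operations), and `c` maps the rough set of `X` to the rough set of `Xᶜ`;
hence `RS` with `c` is a Kleene algebra. -/
theorem roughSets_kleene (R : U → U → Prop) (hrefl : Reflexive R) (htrans : Transitive R) :
    (∀ X : Set U, cpair (lap R X, uap R X) = (lap R Xᶜ, uap R Xᶜ)) ∧
    (∀ X Y : Set U,
      ((lap R X, uap R X) ⊓ cpair (lap R X, uap R X) : Set U × Set U) ≤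
        (lap R Y, uap R Y) ⊔ cpair (lap R Y, uap R Y)) :=
  roughSets_kleene_general R hrefl
end

section
/- Let R be a quasiorder on a set U. The completely join-irreducible elements of the rough set lattice RS are exactly the pairs (∅, {x}▲) with |R(x)| ≥ 2 together with the pairs (R(x), R(x)▲) for x ∈ U. -/
variable {U : Type*}

/-- `j` is a completely join-irreducible element of `RS` (joins in `RS` are
componentwise, since `RS` is a complete sublattice of `℘(U) × ℘(U)`). -/
def CJIRS (R : U → U → Prop) (j : Set U × Set U) : Prop :=
  j ∈ RS R ∧ ∀ S : Set (Set U × Set U), S ⊆ RS R → j = sSup S → j ∈ S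

/-- For a completely join-irreducible `j` of `RS`, `j* = ⋀{z ∈ RS : z ≰ c j}`. -/
def starRS (R : U → U → Prop) (j : Set U × Set U) : Set U × Set U :=
  sInf {z | z ∈ RS R ∧ ¬ z ≤ cpair j}

section Aux
variable {R : U → U → Prop}

lemma mem_fst_sSup {S : Set (Set U × Set U)} {z : U} :
    z ∈ (sSup S).1 ↔ ∃ p ∈ S, z ∈ p.1 := by
  simp [Prod.fst_sSup, Set.sSup_eq_sUnion]

lemma mem_snd_sSup {S : Set (Set U × Set U)} {z : U} :
    z ∈ (sSup S).2 ↔ ∃ p ∈ S, z ∈ p.2 := by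
  simp [Prod.snd_sSup, Set.sSup_eq_sUnion]

lemma lap_rset (hrefl : Reflexive R) (htrans : Transitive R) (x : U) :
    lap R (rset R x) = rset R x := by
  ext y
  constructor
  · intro hy; exact hy (hrefl y)
  · intro hy z hz; exact htrans hy hz

lemma lap_singleton (hrefl : Reflexive R) {x y z : U}
    (hy : R x y) (hz : R x z) (hyz : y ≠ z) : lap R {x} = ∅ := by
  ext w
  simp only [Set.mem_empty_iff_false, iff_false]
  intro hw
  have hwx : w = x := hw (hrefl w)
  subst hwx
  exact hyz ((hw hy).trans (hw hz).symm)
end Aux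

/-- The completely join-irreducible elements of `RS` are exactly the pairs
`(∅, {x}▲)` with `|R(x)| ≥ 2`, together with the pairs `(R(x), R(x)▲)`. -/
theorem roughSets_joinIrreducibles (R : U → U → Prop)
    (hrefl : Reflexive R) (htrans : Transitive R) (j : Set U × Set U) :
    CJIRS R j ↔
      (∃ x : U, (∃ y z, R x y ∧ R x z ∧ y ≠ z) ∧ j = (∅, uap R {x})) ∨
      (∃ x : U, j = (rset R x, uap R (rset R x))) := by
  constructor
  · rintro ⟨⟨X, rfl⟩, hirr⟩
    set S : Set (Set U × Set U) :=
      {p | (∃ x ∈ lap R X, p = (rset R x, uap R (rset R x))) ∨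
           (∃ x ∈ X, (∃ y z, R x y ∧ R x z ∧ y ≠ z) ∧ p = (∅, uap R {x}))} with hSdef
    have hsub : S ⊆ RS R := by
      rintro p (⟨x, _, rfl⟩ | ⟨x, _, ⟨y, z, hy, hz, hyz⟩, rfl⟩)
      · exact ⟨rset R x, by rw [lap_rset hrefl htrans]⟩
      · exact ⟨{x}, by rw [lap_singleton hrefl hy hz hyz]⟩
    have hsup : (lap R X, uap R X) = sSup S := by
      apply Prod.ext
      · ext w
        rw [mem_fst_sSup]
        constructor
        · intro hw
          exact ⟨(rset R w, uap R (rset R w)), Or.inl ⟨w, hw, rfl⟩, hrefl w⟩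
        · rintro ⟨p, (⟨x, hx, rfl⟩ | ⟨x, _, _, rfl⟩), hw⟩
          · intro z hz
            exact hx (htrans hw hz)
          · exact absurd hw (Set.notMem_empty w)
      · ext w
        rw [mem_snd_sSup]
        constructor
        · rintro ⟨x, hxw, hxX⟩
          by_cases hbig : ∃ y z, R x y ∧ R x z ∧ y ≠ z
          · exact ⟨(∅, uap R {x}), Or.inr ⟨x, hxX, hbig, rfl⟩, ⟨x, hxw, rfl⟩⟩
          · -- rset R x = {x}
            have hsingle : ∀ y, R x y → y = x := by
              intro y hy
              by_contra hne
              exact hbig ⟨y, x, hy, hrefl x, hne⟩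
            have hxlap : x ∈ lap R X := by
              intro z hz
              have hzx := hsingle z hz
              subst hzx
              exact hxX
            exact ⟨(rset R x, uap R (rset R x)), Or.inl ⟨x, hxlap, rfl⟩,
              ⟨x, hxw, hrefl x⟩⟩
        · rintro ⟨p, (⟨x, hx, rfl⟩ | ⟨x, hxX, _, rfl⟩), hw⟩
          · obtain ⟨z, hwz, hzx⟩ := hw
            exact ⟨z, hwz, hx hzx⟩
          · obtain ⟨z, hwz, hzx⟩ := hw
            rw [Set.mem_singleton_iff] at hzx
            subst hzx
            exact ⟨z, hwz, hxX⟩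
    rcases hirr S hsub hsup with (⟨x, _, hp⟩ | ⟨x, _, hbig, hp⟩)
    · exact Or.inr ⟨x, hp⟩
    · exact Or.inl ⟨x, hbig, hp⟩
  · rintro (⟨x, ⟨y, z, hy, hz, hyz⟩, rfl⟩ | ⟨x, rfl⟩)
    · refine ⟨⟨{x}, by rw [lap_singleton hrefl hy hz hyz]⟩, ?_⟩
      intro S hsub hsup
      have hxmem : x ∈ (sSup S).2 := by
        rw [← hsup]; exact ⟨x, hrefl x, rfl⟩
      obtain ⟨p, hpS, hxp⟩ := mem_snd_sSup.mp hxmem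
      obtain ⟨Y, rfl⟩ := hsub hpS
      have hle : (lap R Y, uap R Y) ≤ sSup S := le_sSup hpS
      rw [← hsup] at hle
      have h1 : lap R Y = (∅ : Set U) := Set.eq_empty_of_subset_empty hle.1
      have h2 : uap R Y = uap R {x} := by
        apply Set.Subset.antisymm hle.2
        rintro w ⟨v, hwv, hvx⟩
        rw [Set.mem_singleton_iff] at hvx
        subst hvx
        obtain ⟨u, hxu, huY⟩ := hxp
        exact ⟨u, htrans hwv hxu, huY⟩
      have heq : (lap R Y, uap R Y) = ((∅ : Set U), uap R {x}) := by rw [h1, h2]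
      exact heq ▸ hpS
    · refine ⟨⟨rset R x, by rw [lap_rset hrefl htrans]⟩, ?_⟩
      intro S hsub hsup
      have hxmem : x ∈ (sSup S).1 := by
        rw [← hsup]; exact hrefl x
      obtain ⟨p, hpS, hxp⟩ := mem_fst_sSup.mp hxmem
      obtain ⟨Y, rfl⟩ := hsub hpS
      have hle : (lap R Y, uap R Y) ≤ sSup S := le_sSup hpS
      rw [← hsup] at hle
      have h1 : lap R Y = rset R x := by
        apply Set.Subset.antisymm hle.1
        intro w hw v hv
        exact hxp (htrans hw hv)
      have h2 : uap R Y = uap R (rset R x) := by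
        apply Set.Subset.antisymm hle.2
        rintro w ⟨v, hwv, hvx⟩
        exact ⟨v, hwv, hxp hvx⟩
      have heq : (lap R Y, uap R Y) = (rset R x, uap R (rset R x)) := by
        rw [h2, h1]
      exact heq ▸ hpS
end

section
/- Let R be a quasiorder on U and let j = (∅, {x}▲) be a completely join-irreducible element of RS with |R(x)| ≥ 2. Then j* = (R(x), R(x)▲), where j* is the least element of RS not below c(j). -/
variable {U : Type*}

/-- For `j = (∅, {x}▲)` completely join-irreducible with `|R(x)| ≥ 2`,
`j* = (R(x), R(x)▲)` is the least element of `RS` not below `c j`. -/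
theorem roughSets_star_of_empty (R : U → U → Prop)
    (hrefl : Reflexive R) (htrans : Transitive R) (x : U)
    (htwo : ∃ y z, R x y ∧ R x z ∧ y ≠ z)
    (j : Set U × Set U) (hj : j = (∅, uap R {x})) (hcji : CJIRS R j) :
    IsLeast {z | z ∈ RS R ∧ ¬ z ≤ cpair j} (rset R x, uap R (rset R x)) := by
  subst hj
  constructor
  · constructor
    · refine ⟨rset R x, ?_⟩
      have h1 : lap R (rset R x) = rset R x := by
        ext z
        constructor
        · intro hz; exact hz (hrefl z)
        · intro hz y hy; exact htrans hz hy
      rw [h1]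
    · intro hle
      have h1 := hle.1
      have hx : x ∈ rset R x := hrefl x
      have hx2 : x ∈ uap R {x} := ⟨x, hrefl x, rfl⟩
      exact (h1 hx) hx2
  · rintro ⟨p1, p2⟩ ⟨⟨X, hX⟩, hnle⟩
    injection hX with h1 h2
    subst h1; subst h2
    have hex : ∃ w, w ∈ lap R X ∧ w ∈ uap R {x} := by
      by_contra h
      push_neg at h
      apply hnle
      constructor
      · intro w hw
        exact h w hw
      · intro w _
        simp [cpair]
    obtain ⟨w, hw1, hw2⟩ := hex
    obtain ⟨y, hwy, hyx⟩ := hw2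
    have hwx : R w x := by
      rw [Set.mem_singleton_iff] at hyx; subst hyx; exact hwy
    constructor
    · intro y hy z hz
      exact hw1 (htrans hwx (htrans hy hz))
    · rintro y ⟨z, hyz, hxz⟩
      exact ⟨z, hyz, hw1 (htrans hwx hxz)⟩
end

section
/- Let R be a quasiorder on U. A completely join-irreducible element j of RS satisfies j = j* if and only if j = ({x}, {x}▲) for some x with R(x) = {x}. -/
variable {U : Type*}

section Aux

variable {R : U → U → Prop}

lemma pairA_mem_RS (hrefl : Reflexive R) (htrans : Transitive R) (x : U) :
    (rset R x, uap R (rset R x)) ∈ RS R :=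
  ⟨rset R x, by rw [lap_rset hrefl htrans]⟩

lemma lap_singleton_s14 (hrefl : Reflexive R) {x : U} (hx : rset R x ≠ {x}) :
    lap R {x} = (∅ : Set U) := by
  ext y
  simp only [Set.mem_empty_iff_false, iff_false]
  intro hy
  have hyx : y = x := hy (hrefl y)
  subst hyx
  exact hx (hy.antisymm (Set.singleton_subset_iff.2 (hrefl y)))

lemma pairB_mem_RS (hrefl : Reflexive R) {x : U} (hx : rset R x ≠ {x}) :
    ((∅ : Set U), uap R {x}) ∈ RS R :=
  ⟨{x}, by rw [lap_singleton_s14 hrefl hx]⟩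

/-- The canonical decomposition set for `(X▼, X▲)`. -/
def decompS (R : U → U → Prop) (X : Set U) : Set (Set U × Set U) :=
  {p | (∃ x ∈ lap R X, p = (rset R x, uap R (rset R x))) ∨
    (∃ x, x ∈ uap R X ∧ rset R x ≠ {x} ∧ p = ((∅ : Set U), uap R {x}))}

lemma decompS_subset_RS (hrefl : Reflexive R) (htrans : Transitive R) (X : Set U) :
    decompS R X ⊆ RS R := by
  rintro p (⟨x, _, rfl⟩ | ⟨x, _, hne, rfl⟩)
  · exact pairA_mem_RS hrefl htrans x
  · exact pairB_mem_RS hrefl hne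

lemma decompS_sSup (hrefl : Reflexive R) (htrans : Transitive R) (X : Set U) :
    (lap R X, uap R X) = sSup (decompS R X) := by
  apply le_antisymm
  · rw [Prod.le_def]
    constructor
    · intro y hy
      have hmem : (rset R y, uap R (rset R y)) ∈ decompS R X := Or.inl ⟨y, hy, rfl⟩
      exact (Prod.le_def.1 (le_sSup hmem)).1 (hrefl y)
    · intro y hy
      by_cases h : rset R y = {y}
      · have hyX : y ∈ X := by
          obtain ⟨w, hw1, hw2⟩ := hy
          rw [h] at hw1
          cases hw1
          exact hw2
        have hyl : y ∈ lap R X := by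
          intro z hz
          rw [h] at hz; cases hz; exact hyX
        have hmem : (rset R y, uap R (rset R y)) ∈ decompS R X := Or.inl ⟨y, hyl, rfl⟩
        exact (Prod.le_def.1 (le_sSup hmem)).2 ⟨y, hrefl y, hrefl y⟩
      · have hmem : ((∅ : Set U), uap R {y}) ∈ decompS R X := Or.inr ⟨y, hy, h, rfl⟩
        exact (Prod.le_def.1 (le_sSup hmem)).2 ⟨y, hrefl y, rfl⟩
  · apply sSup_le
    rintro p (⟨x, hx, rfl⟩ | ⟨x, hx, hne, rfl⟩)
    · rw [Prod.le_def]
      constructor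
      · intro y hy z hz
        exact hx (htrans hy hz)
      · rintro z ⟨w, hzw, hxw⟩
        exact ⟨w, hzw, hx hxw⟩
    · rw [Prod.le_def]
      refine ⟨Set.empty_subset _, ?_⟩
      rintro z ⟨w, hzw, hwx⟩
      cases hwx
      obtain ⟨v, hxv, hvX⟩ := hx
      exact ⟨v, htrans hzw hxv, hvX⟩

end Aux

/-- A completely join-irreducible `j` of `RS` satisfies `j = j*` iff
`j = ({x}, {x}▲)` for some `x` with `R(x) = {x}`. -/
theorem roughSets_star_fixed (R : U → U → Prop)
    (hrefl : Reflexive R) (htrans : Transitive R)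
    (j : Set U × Set U) (hcji : CJIRS R j) :
    j = starRS R j ↔ ∃ x : U, rset R x = {x} ∧ j = ({x}, uap R {x}) := by
  constructor
  · intro hstar
    obtain ⟨X, hjX⟩ := hcji.1
    have hmem : j ∈ decompS R X :=
      hcji.2 _ (decompS_subset_RS hrefl htrans X)
        (hjX.trans (decompS_sSup hrefl htrans X))
    rcases hmem with ⟨x, _, hjA⟩ | ⟨x, _, hne, hjB⟩
    · by_cases h : rset R x = {x}
      · exact ⟨x, h, by rw [hjA, h]⟩
      · exfalso
        have hB : ((∅ : Set U), uap R {x}) ∈ {z | z ∈ RS R ∧ ¬ z ≤ cpair j} := by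
          refine ⟨pairB_mem_RS hrefl h, ?_⟩
          rw [hjA]
          intro hle
          have h2 : uap R {x} ⊆ (rset R x)ᶜ := (Prod.le_def.1 hle).2
          exact h2 ⟨x, hrefl x, rfl⟩ (hrefl x)
        have hle := sInf_le hB
        rw [← starRS] at hle
        rw [← hstar, hjA] at hle
        exact (Prod.le_def.1 hle).1 (hrefl x)
    · exfalso
      have hx1 : ∀ z ∈ {z | z ∈ RS R ∧ ¬ z ≤ cpair j}, x ∈ z.1 := by
        rintro z ⟨⟨Y, rfl⟩, hz⟩
        rw [hjB] at hz
        have hns : ¬ (lap R Y ⊆ (uap R {x})ᶜ) := by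
          intro hsub
          exact hz (Prod.le_def.2 ⟨hsub, fun a _ ha => ha⟩)
        obtain ⟨y, hyY, hyx⟩ := Set.not_subset.1 hns
        have hyx' : y ∈ uap R {x} := not_not.1 hyx
        obtain ⟨w, hyw, hwx⟩ := hyx'
        cases hwx
        intro v hv
        exact hyY (htrans hyw hv)
      have hx2 : ((({x} : Set U), (∅ : Set U)) : Set U × Set U) ≤ starRS R j := by
        apply le_sInf
        intro z hz
        exact Prod.le_def.2 ⟨Set.singleton_subset_iff.2 (hx1 z hz), Set.empty_subset _⟩
      have : x ∈ (starRS R j).1 := (Prod.le_def.1 hx2).1 rfl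
      rw [← hstar, hjB] at this
      exact this
  · rintro ⟨x, hxr, hj⟩
    have hx_uap : x ∈ uap R {x} := ⟨x, hrefl x, rfl⟩
    apply le_antisymm
    · apply le_sInf
      rintro z ⟨⟨Y, rfl⟩, hz⟩
      rw [hj] at hz ⊢
      have hxY : x ∈ Y := by
        rw [Prod.le_def, not_and_or] at hz
        rcases hz with hz | hz
        · obtain ⟨y, hyY, hyx⟩ := Set.not_subset.1 hz
          obtain ⟨w, hyw, hwx⟩ := not_not.1 hyx
          cases hwx
          exact hyY hyw
        · obtain ⟨y, hyY, hyx⟩ := Set.not_subset.1 hz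
          have : y = x := not_not.1 hyx
          subst this
          obtain ⟨w, hw1, hw2⟩ := hyY
          rw [hxr] at hw1
          cases hw1
          exact hw2
      refine Prod.le_def.2 ⟨?_, ?_⟩
      · intro y hy
        cases hy
        intro z hz
        rw [hxr] at hz
        cases hz
        exact hxY
      · rintro z ⟨w, hzw, hwx⟩
        cases hwx
        exact ⟨x, hzw, hxY⟩
    · apply sInf_le
      constructor
      · rw [hj]
        refine ⟨{x}, ?_⟩
        have : lap R {x} = ({x} : Set U) := by
          rw [← hxr, lap_rset hrefl htrans, hxr]
        rw [this]
      · rw [hj]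
        intro hle
        have h1 : ({x} : Set U) ⊆ (uap R {x})ᶜ := (Prod.le_def.1 hle).1
        exact h1 rfl hx_uap
end

section
/- Let R be a quasiorder on U. The Kleene algebra RS has the interpolation property in the following form (condition M): for any completely join-irreducible p, q of RS with p* ≤ p, q* ≤ q, p* ≤ q, q* ≤ p, there exists a completely join-irreducible k with p* ≤ k, q* ≤ k, k ≤ p, k ≤ q. -/
variable {U : Type*}

namespace RoughM

variable {R : U → U → Prop}

/-- The pair `(R(x), R(x)▲)`. -/
def bpt (R : U → U → Prop) (x : U) : Set U × Set U := (rset R x, uap R (rset R x))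

lemma uap_mono {X Y : Set U} (h : X ⊆ Y) : uap R X ⊆ uap R Y := by
  rintro w ⟨t, ht1, ht2⟩; exact ⟨t, ht1, h ht2⟩

lemma lap_rset (hrefl : Reflexive R) (htrans : Transitive R) (x : U) :
    lap R (rset R x) = rset R x := by
  ext w
  constructor
  · intro hw; exact hw (hrefl w)
  · intro hw z hz; exact htrans hw hz

lemma bpt_mem_RS (hrefl : Reflexive R) (htrans : Transitive R) (x : U) :
    bpt R x ∈ RS R := by
  exact ⟨rset R x, by rw [bpt, lap_rset hrefl htrans]⟩

lemma mem_fst_sSup {S : Set (Set U × Set U)} {x : U} :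
    x ∈ (sSup S).1 ↔ ∃ s ∈ S, x ∈ s.1 := by
  rw [Prod.fst_sSup, Set.sSup_eq_sUnion, Set.mem_sUnion]
  constructor
  · rintro ⟨t, ⟨s, hs, rfl⟩, hx⟩; exact ⟨s, hs, hx⟩
  · rintro ⟨s, hs, hx⟩; exact ⟨s.1, ⟨s, hs, rfl⟩, hx⟩

lemma mem_snd_sSup {S : Set (Set U × Set U)} {x : U} :
    x ∈ (sSup S).2 ↔ ∃ s ∈ S, x ∈ s.2 := by
  rw [Prod.snd_sSup, Set.sSup_eq_sUnion, Set.mem_sUnion]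
  constructor
  · rintro ⟨t, ⟨s, hs, rfl⟩, hx⟩; exact ⟨s, hs, hx⟩
  · rintro ⟨s, hs, hx⟩; exact ⟨s.2, ⟨s, hs, rfl⟩, hx⟩

lemma mem_fst_sInf {S : Set (Set U × Set U)} {x : U} :
    x ∈ (sInf S).1 ↔ ∀ s ∈ S, x ∈ s.1 := by
  rw [Prod.fst_sInf, Set.sInf_eq_sInter, Set.mem_sInter]
  constructor
  · rintro h s hs; exact h s.1 ⟨s, hs, rfl⟩
  · rintro h t ⟨s, hs, rfl⟩; exact h s hs

lemma mem_snd_sInf {S : Set (Set U × Set U)} {x : U} :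
    x ∈ (sInf S).2 ↔ ∀ s ∈ S, x ∈ s.2 := by
  rw [Prod.snd_sInf, Set.sInf_eq_sInter, Set.mem_sInter]
  constructor
  · rintro h s hs; exact h s.2 ⟨s, hs, rfl⟩
  · rintro h t ⟨s, hs, rfl⟩; exact h s hs

/-- Each `b_z` is completely join-irreducible. -/
lemma bpt_CJI (hrefl : Reflexive R) (htrans : Transitive R) (x : U) :
    CJIRS R (bpt R x) := by
  refine ⟨bpt_mem_RS hrefl htrans x, ?_⟩
  intro S hS hsup
  have hx : x ∈ (sSup S).1 := by rw [← hsup]; exact hrefl x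
  rw [mem_fst_sSup] at hx
  obtain ⟨s, hsS, hxs⟩ := hx
  obtain ⟨X, hsX⟩ := hS hsS
  have hle : s ≤ sSup S := le_sSup hsS
  rw [← hsup] at hle
  have hxX : rset R x ⊆ X := by rw [hsX] at hxs; exact hxs
  have h1 : s.1 = rset R x := by
    apply subset_antisymm hle.1
    intro z hz
    rw [hsX]
    exact fun w hw => hxX (htrans hz hw)
  have h2 : s.2 = uap R (rset R x) := by
    apply subset_antisymm hle.2
    rw [hsX]
    exact uap_mono hxX
  have : s = bpt R x := Prod.ext h1 h2
  rwa [← this]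

/-- If `z ∈ R(x)` then `b_z ≤ b_x`. -/
lemma bpt_le_bpt (htrans : Transitive R) {x z : U} (hz : R x z) :
    bpt R z ≤ bpt R x := by
  have h1 : rset R z ⊆ rset R x := fun w hw => htrans hz hw
  exact ⟨h1, uap_mono h1⟩

/-- If `z ∈ R(x)` then `star(b_x) ≤ b_z`. -/
lemma star_le_bpt (hrefl : Reflexive R) (htrans : Transitive R) {x z : U} (hz : R x z) :
    starRS R (bpt R x) ≤ bpt R z := by
  apply sInf_le
  refine ⟨bpt_mem_RS hrefl htrans z, ?_⟩
  intro hle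
  have hz2 : z ∈ (bpt R z).2 := ⟨z, hrefl z, hrefl z⟩
  have := hle.2 hz2
  exact this hz

/-- `x ∈ (star(b_x)).2`. -/
lemma mem_star_snd (hrefl : Reflexive R) (htrans : Transitive R) (x : U) :
    x ∈ (starRS R (bpt R x)).2 := by
  rw [starRS, mem_snd_sInf]
  rintro s ⟨hsRS, hsnle⟩
  obtain ⟨Z, rfl⟩ := hsRS
  rw [Prod.le_def, not_and_or] at hsnle
  simp only [cpair, bpt, Set.le_eq_subset, Set.not_subset, Set.notMem_compl_iff] at hsnle
  rcases hsnle with ⟨w, hw1, hw2⟩ | ⟨v, hv1, hv2⟩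
  · obtain ⟨v, hv1, hv2⟩ := hw2
    exact ⟨v, hv2, hw1 hv1⟩
  · obtain ⟨t, ht1, ht2⟩ := hv1
    exact ⟨t, htrans hv2 ht1, ht2⟩

/-- Classification: a CJI `p` with `p* ≤ p` is of the form `b_x`. -/
lemma CJI_eq_bpt (hrefl : Reflexive R) (htrans : Transitive R) {p : Set U × Set U}
    (hp : CJIRS R p) (hpp : starRS R p ≤ p) : ∃ x, p = bpt R x := by
  obtain ⟨⟨X, rfl⟩, hirr⟩ := hp
  set S : Set (Set U × Set U) :=
    (fun u => bpt R u) '' (lap R X) ∪ (fun u => (lap R {u}, uap R {u})) '' X with hSdef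
  have hSsub : S ⊆ RS R := by
    rintro s (⟨u, _, rfl⟩ | ⟨u, _, rfl⟩)
    · exact bpt_mem_RS hrefl htrans u
    · exact ⟨{u}, rfl⟩
  have hsup : (lap R X, uap R X) = sSup S := by
    apply Prod.ext
    · apply Set.ext
      intro w
      rw [mem_fst_sSup]
      constructor
      · intro hw
        exact ⟨bpt R w, Or.inl ⟨w, hw, rfl⟩, hrefl w⟩
      · rintro ⟨s, (⟨u, hu, rfl⟩ | ⟨u, hu, rfl⟩), hws⟩
        · exact fun v hv => hu (htrans hws hv)
        · intro v hv
          have := hws hv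
          rw [Set.mem_singleton_iff] at this
          exact this ▸ hu
    · apply Set.ext
      intro v
      rw [mem_snd_sSup]
      constructor
      · rintro ⟨t, htv, htX⟩
        exact ⟨(lap R {t}, uap R {t}), Or.inr ⟨t, htX, rfl⟩, ⟨t, htv, rfl⟩⟩
      · rintro ⟨s, (⟨u, hu, rfl⟩ | ⟨u, hu, rfl⟩), hvs⟩
        · obtain ⟨t, ht1, ht2⟩ := hvs
          exact ⟨t, ht1, hu ht2⟩
        · obtain ⟨t, ht1, ht2⟩ := hvs
          rw [Set.mem_singleton_iff] at ht2
          exact ⟨t, ht1, ht2 ▸ hu⟩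
  have hmem := hirr S hSsub hsup
  rcases hmem with ⟨u, _, hbu⟩ | ⟨u, huX, hzu⟩
  · exact ⟨u, hbu.symm⟩
  · -- p = (lap R {u}, uap R {u})
    have hzu' : (lap R {u}, uap R {u}) = (lap R X, uap R X) := hzu
    have hlu : lap R {u} = lap R X := congrArg Prod.fst hzu'
    have huu : uap R {u} = uap R X := congrArg Prod.snd hzu'
    by_cases h : (lap R {u}).Nonempty
    · obtain ⟨w, hw⟩ := h
      have hwu : w = u := hw (hrefl w)
      rw [hwu] at hw
      have h1 : rset R u = {u} := by
        apply subset_antisymm hw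
        intro v hv
        rw [Set.mem_singleton_iff] at hv
        exact hv ▸ hrefl u
      have h2 : lap R {u} = {u} := by
        apply subset_antisymm
        · intro v hv
          exact hv (hrefl v)
        · intro v hv
          rw [Set.mem_singleton_iff] at hv
          subst hv
          exact hw
      refine ⟨u, ?_⟩
      rw [← hzu', bpt, h1, h2]
    · exfalso
      rw [Set.not_nonempty_iff_eq_empty] at h
      have hstar : u ∈ (starRS R (lap R X, uap R X)).1 := by
        rw [starRS, mem_fst_sInf]
        rintro s ⟨hsRS, hsnle⟩
        obtain ⟨Z, rfl⟩ := hsRS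
        rw [Prod.le_def, not_and_or] at hsnle
        simp only [cpair, Set.le_eq_subset, Set.not_subset,
          Set.notMem_compl_iff] at hsnle
        rcases hsnle with ⟨w, hw1, hw2⟩ | ⟨w, hw1, hw2⟩
        · rw [← huu] at hw2
          obtain ⟨t, ht1, ht2⟩ := hw2
          rw [Set.mem_singleton_iff] at ht2
          subst ht2
          exact fun v hv => hw1 (htrans ht1 hv)
        · exfalso
          rw [← hlu, h] at hw2
          exact hw2
      have h3 : u ∈ lap R X := hpp.1 hstar
      rw [← hlu, h] at h3
      exact h3

end RoughM

open RoughM in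
/-- The rough-set Kleene algebra of a quasiorder satisfies condition (M). -/
theorem roughSets_condition_M (R : U → U → Prop)
    (hrefl : Reflexive R) (htrans : Transitive R)
    (p q : Set U × Set U) (hp : CJIRS R p) (hq : CJIRS R q)
    (hpp : starRS R p ≤ p) (hqq : starRS R q ≤ q)
    (hpq : starRS R p ≤ q) (hqp : starRS R q ≤ p) :
    ∃ k : Set U × Set U, CJIRS R k ∧
      starRS R p ≤ k ∧ starRS R q ≤ k ∧ k ≤ p ∧ k ≤ q := by
  obtain ⟨x, rfl⟩ := CJI_eq_bpt hrefl htrans hp hpp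
  obtain ⟨y, rfl⟩ := CJI_eq_bpt hrefl htrans hq hqq
  have hx2 : x ∈ (bpt R y).2 := hpq.2 (mem_star_snd hrefl htrans x)
  obtain ⟨z, hzx, hzy⟩ := hx2
  exact ⟨bpt R z, bpt_CJI hrefl htrans z,
    star_le_bpt hrefl htrans hzx, star_le_bpt hrefl htrans hzy,
    bpt_le_bpt htrans hzx, bpt_le_bpt htrans hzy⟩
end

section
/- Let R be a quasiorder on a nonempty set U. Suppose the rough set De Morgan algebra RS admits a unary operation Δ satisfying the three-valued Łukasiewicz axioms c(x) ∨ Δ(x) = ⊤ and x ∧ c(x) = c(x) ∧ Δ(x) (together with Δ(x ∧ y) = Δ(x) ∧ Δ(y)). Then R is symmetric, hence an equivalence relation. -/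
variable {U : Type*}

/-- If the rough-set De Morgan algebra of a quasiorder `R` on a nonempty set
admits a unary operation `Δ` satisfying the three-valued Łukasiewicz axioms,
then `R` is symmetric, hence an equivalence. -/
theorem roughSets_lukasiewicz_implies_symmetric [Nonempty U]
    (R : U → U → Prop) (hrefl : Reflexive R) (htrans : Transitive R)
    (Δ : Set U × Set U → Set U × Set U)
    (hmem : ∀ p ∈ RS R, Δ p ∈ RS R)
    (hL3 : ∀ p ∈ RS R, cpair p ⊔ Δ p = (⊤ : Set U × Set U))
    (hL4 : ∀ p ∈ RS R, p ⊓ cpair p = cpair p ⊓ Δ p)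
    (hL5 : ∀ p ∈ RS R, ∀ q ∈ RS R, Δ (p ⊓ q) = Δ p ⊓ Δ q) :
    Symmetric R := by
  intro a b hab
  by_contra hba
  have hne : a ≠ b := by rintro rfl; exact hba hab
  set p : Set U × Set U := (lap R {a}, uap R {a}) with hpdef
  have hp : p ∈ RS R := ⟨{a}, rfl⟩
  obtain ⟨Y, hY⟩ := hmem p hp
  -- From L3 (first components): a ∈ (Δ p).1 = lap R Y
  have h3 := congrArg Prod.fst (hL3 p hp)
  have ha_u : a ∈ uap R ({a} : Set U) := ⟨a, hrefl a, rfl⟩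
  have haΔ : a ∈ (Δ p).1 := by
    have : a ∈ (cpair p).1 ∪ (Δ p).1 := by
      rw [show (cpair p).1 ∪ (Δ p).1 = (cpair p ⊔ Δ p).1 from rfl, h3]
      trivial
    rcases this with h | h
    · exact absurd ha_u h
    · exact h
  have hbY : b ∈ Y := by
    have : a ∈ lap R Y := by rw [hY] at haΔ; exact haΔ
    exact this hab
  have hb_uY : b ∈ uap R Y := ⟨b, hrefl b, hbY⟩
  have hb_nl : b ∉ lap R ({a} : Set U) := by
    intro h
    exact hne (h (hrefl b)).symm
  -- From L4 (second components): b ∈ uap R {a}, i.e. R b a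
  have h4 := congrArg Prod.snd (hL4 p hp)
  have hbR : b ∈ p.2 ⊓ (cpair p).2 := by
    rw [show p.2 ⊓ (cpair p).2 = (p ⊓ cpair p).2 from rfl, h4]
    refine ⟨hb_nl, ?_⟩
    rw [hY]
    exact hb_uY
  obtain ⟨y, hy1, hy2⟩ := hbR.1
  exact hba (by rwa [Set.mem_singleton_iff.mp hy2] at hy1)
end

section
/- Let A be a Nelson algebra defined on an algebraic lattice, J its set of completely join-irreducible elements, and define ρ(j) = j if j ≤ j*, and ρ(j) = j* otherwise. Define a relation R on J by x R y iff ρ(x) ≤ ρ(y). Then R is a quasiorder on J, and for every x ∈ J: R(x) = R(x*), and R(x) = {x} if and only if x = x*. -/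
-- `ρ(j) = j` if `j ≤ j*` (i.e. `j ∈ J⁻ ∪ J*`), and `ρ(j) = j*` otherwise.
open Classical in
noncomputable def rho {A : Type*} [CompleteLattice A] (c : A → A) (j : A) : A :=
  if j ≤ star c j then j else star c j

/-!
Write `~` for `c`. In a distributive algebraic lattice every completely join-irreducible `j`
is completely join-prime. Applied to `~j* = ⋁ {~x : x ≰ ~j}` this gives `j* ≰ ~j`, from which
`j*` is completely join-irreducible and `j** = j`. If `j ≤ ~j`, then `j ≤ j ⊓ ~j ≤ y ⊔ ~y`
and join-primeness give `j ≤ j*`; otherwise `j* ≤ j`. Hence `ρ(j*) = ρ(j)`, so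
`R(x) = R(x*)` and `x* ∈ R(x)`. Conversely, if `x = x*` and `x ≤ ρ(y)`, applying the
antitone map `*` and using `y** = y` forces `y = x`.
-/

section

variable {A : Type*} [CompleteLattice A] {c : A → A}

theorem inf_sSup_le_sSup_image_inf [IsCompactlyGenerated A]
    (hdist : ∀ x y z : A, x ⊓ (y ⊔ z) = (x ⊓ y) ⊔ (x ⊓ z)) (a : A) (S : Set A) :
    a ⊓ sSup S ≤ sSup ((a ⊓ ·) '' S) := by
  rw [inf_sSup_eq_iSup_inf_sup_finset]
  refine iSup₂_le fun t ht => Finset.sup_induction (p := (a ⊓ · ≤ sSup ((a ⊓ ·) '' S)))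
    (by simp) (fun b hb d hd => ?_) (fun i hi => le_sSup ⟨i, ht hi, rfl⟩)
  rw [hdist]
  exact sup_le hb hd

theorem CompletelyJoinIrreducible.exists_mem_le_of_le_sSup [IsCompactlyGenerated A]
    (hdist : ∀ x y z : A, x ⊓ (y ⊔ z) = (x ⊓ y) ⊔ (x ⊓ z)) {x : A}
    (hx : CompletelyJoinIrreducible x) {S : Set A} (hle : x ≤ sSup S) : ∃ s ∈ S, x ≤ s := by
  have hsup : x = sSup ((x ⊓ ·) '' S) := le_antisymm
    ((le_inf le_rfl hle).trans (inf_sSup_le_sSup_image_inf hdist x S))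
    (sSup_le (Set.forall_mem_image.2 fun _ _ => inf_le_left))
  obtain ⟨s, hs, heq⟩ := hx _ hsup
  exact ⟨s, hs, inf_eq_left.mp heq⟩

theorem Antitone.le_apply_comm (hanti : Antitone c) (hinv : Function.Involutive c) {x y : A} :
    x ≤ c y ↔ y ≤ c x :=
  ⟨fun h => hinv y ▸ hanti h, fun h => hinv x ▸ hanti h⟩

theorem Antitone.apply_le_comm (hanti : Antitone c) (hinv : Function.Involutive c) {x y : A} :
    c x ≤ y ↔ c y ≤ x :=
  ⟨fun h => hinv x ▸ hanti h, fun h => hinv y ▸ hanti h⟩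

theorem Antitone.apply_sInf (hanti : Antitone c) (hinv : Function.Involutive c) (S : Set A) :
    c (sInf S) = sSup (c '' S) := by
  refine le_antisymm ?_ (sSup_le <| Set.forall_mem_image.2 fun _ hs => hanti (sInf_le hs))
  refine (hanti.apply_le_comm hinv).2 (le_sInf fun s hs => ?_)
  exact (hanti.apply_le_comm hinv).1 (le_sSup ⟨s, hs, rfl⟩)

theorem antitone_star (hanti : Antitone c) : Antitone (star c) :=
  fun _ _ hxy => sInf_le_sInf fun _ hz hzy => hz (hzy.trans (hanti hxy))

theorem rho_of_le {j : A} (h : j ≤ star c j) : rho c j = j := if_pos h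

theorem rho_of_not_le {j : A} (h : ¬ j ≤ star c j) : rho c j = star c j := if_neg h

namespace CompletelyJoinIrreducible

variable [IsCompactlyGenerated A] {x : A}

theorem star_not_le_apply (hdist : ∀ x y z : A, x ⊓ (y ⊔ z) = (x ⊓ y) ⊔ (x ⊓ z))
    (hx : CompletelyJoinIrreducible x) (hanti : Antitone c) (hinv : Function.Involutive c) :
    ¬ star c x ≤ c x := by
  intro h
  have hle : x ≤ sSup (c '' {z | ¬ z ≤ c x}) := by
    rw [← hanti.apply_sInf hinv]
    exact (hanti.le_apply_comm hinv).1 h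
  obtain ⟨_, ⟨z, hz, rfl⟩, hxz⟩ := hx.exists_mem_le_of_le_sSup hdist hle
  exact hz ((hanti.le_apply_comm hinv).1 hxz)

theorem star_star (hdist : ∀ x y z : A, x ⊓ (y ⊔ z) = (x ⊓ y) ⊔ (x ⊓ z))
    (hx : CompletelyJoinIrreducible x) (hanti : Antitone c) (hinv : Function.Involutive c) :
    star c (star c x) = x := by
  refine le_antisymm (sInf_le fun hle => ?_) (le_sInf fun y hy => ?_)
  · exact hx.star_not_le_apply hdist hanti hinv ((hanti.le_apply_comm hinv).1 hle)
  · by_contra hxy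
    have hcy : ¬ c y ≤ c x := fun h => hxy (hinv x ▸ hinv y ▸ hanti h)
    exact hy ((hanti.le_apply_comm hinv).2 (sInf_le hcy))

theorem star_completelyJoinIrreducible (hdist : ∀ x y z : A, x ⊓ (y ⊔ z) = (x ⊓ y) ⊔ (x ⊓ z))
    (hx : CompletelyJoinIrreducible x) (hanti : Antitone c) (hinv : Function.Involutive c) :
    CompletelyJoinIrreducible (star c x) := by
  intro S hS
  obtain ⟨s, hsS, hs⟩ : ∃ s ∈ S, ¬ s ≤ c x := by
    by_contra! hall
    exact hx.star_not_le_apply hdist hanti hinv (hS ▸ sSup_le hall)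
  have hxs : star c x ≤ s := sInf_le hs
  have hsx : s ≤ star c x := hS ▸ le_sSup hsS
  rwa [le_antisymm hxs hsx]

theorem le_star_or_star_le (hdist : ∀ x y z : A, x ⊓ (y ⊔ z) = (x ⊓ y) ⊔ (x ⊓ z))
    (hx : CompletelyJoinIrreducible x) (hanti : Antitone c) (hinv : Function.Involutive c)
    (hkl : ∀ x y : A, x ⊓ c x ≤ y ⊔ c y) :
    x ≤ star c x ∨ star c x ≤ x := by
  by_cases h : x ≤ c x
  · refine .inl (le_sInf fun y hy => ?_)
    have hle : x ≤ sSup {y, c y} := by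
      rw [sSup_pair]
      exact (le_inf le_rfl h).trans (hkl x y)
    obtain ⟨s, hs | hs, hxs⟩ := hx.exists_mem_le_of_le_sSup hdist hle
    · exact hs ▸ hxs
    · exact absurd ((hanti.le_apply_comm hinv).1 (hs ▸ hxs)) hy
  · exact .inr (sInf_le h)

theorem rho_star (hdist : ∀ x y z : A, x ⊓ (y ⊔ z) = (x ⊓ y) ⊔ (x ⊓ z))
    (hx : CompletelyJoinIrreducible x) (hanti : Antitone c) (hinv : Function.Involutive c)
    (hkl : ∀ x y : A, x ⊓ c x ≤ y ⊔ c y) :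
    rho c (star c x) = rho c x := by
  have hss := hx.star_star hdist hanti hinv
  by_cases heq : star c x = x
  · rw [heq]
  rcases hx.le_star_or_star_le hdist hanti hinv hkl with h | h
  · have hnle : ¬ star c x ≤ star c (star c x) := by
      rw [hss]
      exact fun h' => heq (le_antisymm h' h)
    rw [rho_of_le h, rho_of_not_le hnle, hss]
  · rw [rho_of_le (by rwa [hss]), rho_of_not_le fun h' => heq (le_antisymm h h')]

theorem eq_of_le_rho (hdist : ∀ x y z : A, x ⊓ (y ⊔ z) = (x ⊓ y) ⊔ (x ⊓ z))
    (hanti : Antitone c) (hinv : Function.Involutive c) {y : A}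
    (hy : CompletelyJoinIrreducible y) (hxx : star c x = x) (hle : x ≤ rho c y) : y = x := by
  by_cases h : y ≤ star c y
  · rw [rho_of_le h] at hle
    have hyx : star c y ≤ x := hxx ▸ antitone_star hanti hle
    exact le_antisymm (h.trans hyx) hle
  · rw [rho_of_not_le h] at hle
    have hyx : y ≤ x := hy.star_star hdist hanti hinv ▸ hxx ▸ antitone_star hanti hle
    exact absurd (hyx.trans hle) h

end CompletelyJoinIrreducible

end

theorem nelson_quasiorder_construction_general {A : Type*}
    [CompleteLattice A] [IsCompactlyGenerated A]
    (hdist : ∀ x y z : A, x ⊓ (y ⊔ z) = (x ⊓ y) ⊔ (x ⊓ z))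
    (c : A → A) (hinv : ∀ x, c (c x) = x)
    (hanti : ∀ x y : A, x ≤ y ↔ c y ≤ c x)
    (hkl : ∀ x y : A, x ⊓ c x ≤ y ⊔ c y) :
    (∀ x : A, CompletelyJoinIrreducible x → rho c x ≤ rho c x) ∧
    (∀ x y z : A, CompletelyJoinIrreducible x → CompletelyJoinIrreducible y →
      CompletelyJoinIrreducible z → rho c x ≤ rho c y → rho c y ≤ rho c z →
      rho c x ≤ rho c z) ∧
    (∀ x : A, CompletelyJoinIrreducible x →
      ({y : A | CompletelyJoinIrreducible y ∧ rho c x ≤ rho c y} =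
        {y : A | CompletelyJoinIrreducible y ∧ rho c (star c x) ≤ rho c y}) ∧
      ({y : A | CompletelyJoinIrreducible y ∧ rho c x ≤ rho c y} = {x} ↔
        x = star c x)) := by
  have hc : Antitone c := fun x y h => (hanti x y).1 h
  refine ⟨fun x _ => le_rfl, fun x y z _ _ _ hxy hyz => hxy.trans hyz, fun x hx => ?_⟩
  have hrho := hx.rho_star hdist hc hinv hkl
  refine ⟨by simp only [hrho], fun hR => ?_, fun hxx => ?_⟩
  · have hmem : star c x ∈ {y | CompletelyJoinIrreducible y ∧ rho c x ≤ rho c y} :=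
      ⟨hx.star_completelyJoinIrreducible hdist hc hinv, hrho.ge⟩
    rw [hR] at hmem
    exact hmem.symm
  · ext y
    refine ⟨fun ⟨hy, hle⟩ => ?_, by rintro rfl; exact ⟨hx, le_rfl⟩⟩
    rw [rho_of_le hxx.le] at hle
    exact hy.eq_of_le_rho hdist hc hinv hxx.symm hle

/-- For a Nelson algebra on an algebraic lattice, the relation
`x R y ↔ ρ(x) ≤ ρ(y)` on the set `J` of completely join-irreducible elements is
a quasiorder such that `R(x) = R(x*)` and `R(x) = {x} ↔ x = x*`. -/
theorem nelson_quasiorder_construction {A : Type*}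
    [CompleteLattice A] [IsCompactlyGenerated A]
    (hdist : ∀ x y z : A, x ⊓ (y ⊔ z) = (x ⊓ y) ⊔ (x ⊓ z))
    (c : A → A) (hinv : ∀ x, c (c x) = x)
    (hanti : ∀ x y : A, x ≤ y ↔ c y ≤ c x)
    (hkl : ∀ x y : A, x ⊓ c x ≤ y ⊔ c y)
    (arrow : A → A → A)
    (hN1 : ∀ a, arrow a a = ⊤)
    (hN2 : ∀ a b, (c a ⊔ b) ⊓ arrow a b = c a ⊔ b)
    (hN3 : ∀ a b, a ⊓ arrow a b = a ⊓ (c a ⊔ b))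
    (hN4 : ∀ a b d, arrow a (b ⊓ d) = arrow a b ⊓ arrow a d)
    (hN5 : ∀ a b d, arrow (a ⊓ b) d = arrow a (arrow b d)) :
    (∀ x : A, CompletelyJoinIrreducible x → rho c x ≤ rho c x) ∧
    (∀ x y z : A, CompletelyJoinIrreducible x → CompletelyJoinIrreducible y →
      CompletelyJoinIrreducible z → rho c x ≤ rho c y → rho c y ≤ rho c z →
      rho c x ≤ rho c z) ∧
    (∀ x : A, CompletelyJoinIrreducible x →
      ({y : A | CompletelyJoinIrreducible y ∧ rho c x ≤ rho c y} =
        {y : A | CompletelyJoinIrreducible y ∧ rho c (star c x) ≤ rho c y}) ∧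
      ({y : A | CompletelyJoinIrreducible y ∧ rho c x ≤ rho c y} = {x} ↔
        x = star c x)) :=
  nelson_quasiorder_construction_general hdist c hinv hanti hkl
end
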